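/- arXiv:1402.3194 — 2 statements merged into one kernel-verified Lean document; each statement's English description precedes it below -/
import Mathlib

section
/- Let γ, g, h₁, h₂ > 0 and u=(h₁,h₂,u₁,u₂,v₁,v₂). With u₀ := u₁, the matrix S_x(u) is positive-definite if and only if γ ∈ (0,1), h₁ > 0, h₂ > 0, and (1−γ)g·h₂ > (u₂−u₁)². -/
/-!
Two steps of symmetric Gaussian elimination, with pivots `g γ` (row 0) and `h₂` (row 3), write
`Sx = Lᴴ D L` with `L` a product of two transvections and `D` diagonal. Congruence by an
invertible matrix preserves positive definiteness, so `Sx` is positive definite iff every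
entry of `D` is positive. The only nontrivial entry is the Schur complement
`(1 - γ) g - (u₂ - u₁)² / h₂`.
-/

open Matrix

noncomputable def Sx (g γ h₁ h₂ u₁ u₂ : ℝ) : Matrix (Fin 6) (Fin 6) ℝ :=
  !![g * γ, g * γ, 0, 0, 0, 0;
     g * γ, g, 0, u₂ - u₁, 0, 0;
     0, 0, γ * h₁, 0, 0, 0;
     0, u₂ - u₁, 0, h₂, 0, 0;
     0, 0, 0, 0, γ * h₁, 0;
     0, 0, 0, 0, 0, h₂]

noncomputable def SxUnipotent (h₂ u₁ u₂ : ℝ) : Matrix (Fin 6) (Fin 6) ℝ :=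
  transvection 0 1 1 * transvection 3 1 ((u₂ - u₁) / h₂)

noncomputable def SxPivots (g γ h₁ h₂ u₁ u₂ : ℝ) : Fin 6 → ℝ :=
  ![g * γ, (1 - γ) * g - (u₂ - u₁) ^ 2 / h₂, γ * h₁, h₂, γ * h₁, h₂]

lemma isUnit_SxUnipotent (h₂ u₁ u₂ : ℝ) : IsUnit (SxUnipotent h₂ u₁ u₂) := by
  rw [isUnit_iff_isUnit_det, SxUnipotent, det_mul, det_transvection_of_ne _ _ (by decide),
    det_transvection_of_ne _ _ (by decide), one_mul]
  exact isUnit_one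

lemma Sx_eq_star_mul_diagonal_mul (g γ h₁ h₂ u₁ u₂ : ℝ) (hh₂ : h₂ ≠ 0) :
    Sx g γ h₁ h₂ u₁ u₂ =
      star (SxUnipotent h₂ u₁ u₂) * diagonal (SxPivots g γ h₁ h₂ u₁ u₂) *
        SxUnipotent h₂ u₁ u₂ := by
  ext i j
  fin_cases i <;> fin_cases j <;>
    simp [Sx, SxUnipotent, SxPivots, transvection, mul_apply, Fin.sum_univ_six, single_apply,
      diagonal] <;>
    field_simp
  ring

theorem Sx_posDef_iff_general (g γ h₁ h₂ u₁ u₂ : ℝ)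
    (hh₂ : 0 < h₂) :
    (Sx g γ h₁ h₂ u₁ u₂).PosDef ↔
      (γ ∈ Set.Ioo (0:ℝ) 1 ∧ 0 < h₁ ∧ 0 < h₂ ∧ (u₂ - u₁)^2 < (1 - γ) * g * h₂) := by
  rw [Sx_eq_star_mul_diagonal_mul g γ h₁ h₂ u₁ u₂ hh₂.ne',
    (isUnit_SxUnipotent h₂ u₁ u₂).posDef_star_left_conjugate_iff, posDef_diagonal_iff]
  simp only [Fin.forall_fin_succ, SxPivots, Fin.isValue, cons_val_zero, cons_val_succ,
    cons_val_fin_one, IsEmpty.forall_iff, and_true, Set.mem_Ioo, sub_pos, div_lt_iff₀ hh₂]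
  constructor
  · rintro ⟨hgγ, hschur, hγh₁, -⟩
    have hp : 0 < (1 - γ) * g := pos_of_mul_pos_left ((sq_nonneg _).trans_lt hschur) hh₂.le
    have hg : 0 < g := by linarith [show g = g * γ + (1 - γ) * g by ring]
    have hγ : 0 < γ := pos_of_mul_pos_right hgγ hg.le
    have hγ₁ : γ < 1 := sub_pos.1 (pos_of_mul_pos_left hp hg.le)
    exact ⟨⟨hγ, hγ₁⟩, pos_of_mul_pos_right hγh₁ hγ.le, hh₂, hschur⟩
  · rintro ⟨⟨hγ, hγ₁⟩, hh₁, -, hschur⟩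
    have hp : 0 < (1 - γ) * g := pos_of_mul_pos_left ((sq_nonneg _).trans_lt hschur) hh₂.le
    have hg : 0 < g := pos_of_mul_pos_right hp (sub_pos.2 hγ₁).le
    exact ⟨by positivity, hschur, by positivity, hh₂, by positivity, hh₂⟩

theorem Sx_posDef_iff (g γ h₁ h₂ u₁ u₂ v₁ v₂ : ℝ)
    (hg : 0 < g) (hγ : 0 < γ) (hh₁ : 0 < h₁) (hh₂ : 0 < h₂) :
    (Sx g γ h₁ h₂ u₁ u₂).PosDef ↔
      (γ ∈ Set.Ioo (0:ℝ) 1 ∧ 0 < h₁ ∧ 0 < h₂ ∧ (u₂ - u₁)^2 < (1 - γ) * g * h₂) :=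
  Sx_posDef_iff_general g γ h₁ h₂ u₁ u₂ hh₂
end

section
/- The characteristic polynomial of the 6×6 matrix A_x(u) factors as det(A_x(u) − μI₆) = (μ−u₁)(μ−u₂)·Q(μ), where Q(μ) = ((μ−u₁)²−g h₁)((μ−u₂)²−g h₂) − γ g² h₁ h₂. -/
/-!
Subtracting `μ • 1` from `Ax` only shifts `u₁, u₂` by `-μ`, so it suffices to compute `det Ax`.
The last two rows of `Ax` are `u₁, u₂` times unit vectors (the transverse velocities decouple),
so expanding along them leaves `u₁ u₂` times the determinant of the 4×4 block coupling the depths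
and normal velocities.
-/

open Matrix

noncomputable def Ax (g γ h₁ h₂ u₁ u₂ v₁ v₂ : ℝ) : Matrix (Fin 6) (Fin 6) ℝ :=
  !![u₁, 0, h₁, 0, 0, 0;
     0, u₂, 0, h₂, 0, 0;
     g, g, u₁, 0, 0, 0;
     γ * g, g, 0, u₂, 0, 0;
     0, 0, 0, 0, u₁, 0;
     0, 0, 0, 0, 0, u₂]
theorem Matrix.det_eq_mul_det_submatrix_of_row_eq_zero {R : Type*} [CommRing R] {n : ℕ}
    (A : Matrix (Fin (n + 1)) (Fin (n + 1)) R) (i : Fin (n + 1)) (hA : ∀ j ≠ i, A i j = 0) :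
    A.det = A i i * (A.submatrix i.succAbove i.succAbove).det := by
  rw [det_succ_row A i, Finset.sum_eq_single i (fun j _ hj => by simp [hA j hj]) (by simp)]
  simp [← two_mul, pow_mul]

theorem det_two_layer_block {R : Type*} [CommRing R] (a b g γ h₁ h₂ : R) :
    !![a, 0, h₁, 0; 0, b, 0, h₂; g, g, a, 0; γ * g, g, 0, b].det =
      (a ^ 2 - g * h₁) * (b ^ 2 - g * h₂) - γ * g ^ 2 * h₁ * h₂ := by
  simp [det_succ_row_zero, Fin.sum_univ_succ, Fin.succAbove]
  ring

theorem Ax_sub_smul_one (g γ h₁ h₂ u₁ u₂ v₁ v₂ μ : ℝ) :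
    Ax g γ h₁ h₂ u₁ u₂ v₁ v₂ - μ • 1 = Ax g γ h₁ h₂ (u₁ - μ) (u₂ - μ) v₁ v₂ := by
  ext i j
  fin_cases i <;> fin_cases j <;> simp [Ax, one_apply]

theorem det_Ax (g γ h₁ h₂ u₁ u₂ v₁ v₂ : ℝ) :
    (Ax g γ h₁ h₂ u₁ u₂ v₁ v₂).det =
      u₁ * u₂ * ((u₁ ^ 2 - g * h₁) * (u₂ ^ 2 - g * h₂) - γ * g ^ 2 * h₁ * h₂) := by
  rw [det_eq_mul_det_submatrix_of_row_eq_zero _ (Fin.last 5)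
      (by intro j hj; fin_cases j <;> first | rfl | exact absurd rfl hj),
    det_eq_mul_det_submatrix_of_row_eq_zero _ (Fin.last 4)
      (by intro j hj; fin_cases j <;> first | rfl | exact absurd rfl hj),
    submatrix_submatrix,
    show (Ax g γ h₁ h₂ u₁ u₂ v₁ v₂).submatrix _ _ =
        !![u₁, 0, h₁, 0; 0, u₂, 0, h₂; g, g, u₁, 0; γ * g, g, 0, u₂] by
      ext i j; fin_cases i <;> fin_cases j <;> rfl,
    det_two_layer_block]
  show u₂ * (u₁ * _) = _
  ring

theorem charpoly_factorization (g γ h₁ h₂ u₁ u₂ v₁ v₂ : ℝ) (μ : ℝ) :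
    (Ax g γ h₁ h₂ u₁ u₂ v₁ v₂ - μ • (1 : Matrix (Fin 6) (Fin 6) ℝ)).det =
      (μ - u₁) * (μ - u₂) *
        (((μ - u₁)^2 - g * h₁) * ((μ - u₂)^2 - g * h₂) - γ * g^2 * h₁ * h₂) := by
  rw [Ax_sub_smul_one, det_Ax]
  ring
end
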